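/- arXiv:1611.05977 — 2 statements merged into one kernel-verified Lean document; each statement's English description precedes it below -/
import Mathlib

section
/- Suppose L is an N1×N2 real matrix of rank r with compact SVD L = UΣVᵀ, and suppose the row-space incoherence parameter μ_v satisfies max_i ‖e_iᵀV‖₂² ≤ μ_v r / N2. If m1 columns of L are sampled uniformly at random with replacement and m1 ≥ 10 μ_v r log(2r/δ), then with probability at least 1−δ the sampled columns span the column space of L. -/
/-!
Let `v i ∈ ℝʳ` be the rows of `V`. Since `Vᵀ V = 1` they form a Parseval frame,
`∑ i ⟪v i, x⟫² = ‖x‖²`, and coherence bounds `‖v i‖² ≤ c := μ_v r / N₂`. The sampled columns of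
`L = (U S) Vᵀ` span its column space as soon as the sampled rows span `ℝʳ`, so we track the
deficiency `dim Wᗮ` of the span `W` of the rows sampled so far. Applying the frame identity to an
orthonormal basis of `Wᗮ` shows that at least `dim Wᗮ / c` rows lie outside `W`, and each of them
lowers the deficiency by one when sampled. Hence the expected deficiency shrinks by the factor
`1 - 1 / (N₂ c) = 1 - 1 / (μ_v r)` per sample, and after `m` samples the probability of not spanning
is at most `r (1 - 1 / (μ_v r))^m ≤ r exp (-m / (μ_v r)) ≤ δ`.
-/

open Matrix

open Finset Module Submodule Set RealInnerProductSpace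

section Sampling

variable {R M ι : Type*} [CommRing R] [AddCommGroup M] [Module R M]

theorem span_range_comp_cons (v : ι → M) {m : ℕ} (f : Fin m → ι) (j : ι) :
    span R (range (v ∘ Fin.cons j f)) = span R (range (v ∘ f)) ⊔ span R {v j} := by
  rw [range_comp, Fin.range_cons, image_insert_eq, span_insert, ← range_comp, sup_comm]

theorem sum_pi_span_range_comp_le_pow [Fintype ι] (v : ι → M) (F : Submodule R M → ℝ) {a : ℝ}
    (ha : 0 ≤ a) (hF : ∀ W, ∑ j, F (W ⊔ span R {v j}) ≤ a * F W) (m : ℕ) :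
    ∑ f : Fin m → ι, F (span R (range (v ∘ f))) ≤ a ^ m * F ⊥ := by
  induction m with
  | zero => simp [range_eq_empty]
  | succ m ih =>
    calc ∑ f : Fin (m + 1) → ι, F (span R (range (v ∘ f)))
        = ∑ f : Fin m → ι, ∑ j, F (span R (range (v ∘ f)) ⊔ span R {v j}) := by
          rw [← (Fin.consEquiv fun _ => ι).sum_comp, Fintype.sum_prod_type_right]
          exact sum_congr rfl fun f _ => sum_congr rfl fun j _ =>
            congrArg F (span_range_comp_cons v f j)
      _ ≤ ∑ f : Fin m → ι, a * F (span R (range (v ∘ f))) := sum_le_sum fun f _ => hF _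
      _ ≤ a * (a ^ m * F ⊥) := by rw [← mul_sum]; exact mul_le_mul_of_nonneg_left ih ha
      _ = a ^ (m + 1) * F ⊥ := by ring

end Sampling

section Frame

variable {ι E : Type*} [Fintype ι] [NormedAddCommGroup E] [InnerProductSpace ℝ E]
  [FiniteDimensional ℝ E] {v : ι → E} {c : ℝ}

open scoped Classical in
theorem finrank_orthogonal_le_card_mul (hv : ∀ x, ‖x‖ ^ 2 ≤ ∑ j, ⟪v j, x⟫ ^ 2)
    (hc : ∀ j, ‖v j‖ ^ 2 ≤ c) (W : Submodule ℝ E) :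
    (finrank ℝ Wᗮ : ℝ) ≤ #{j | v j ∉ W} * c := by
  let b := stdOrthonormalBasis ℝ Wᗮ
  have hb : Orthonormal ℝ fun i => (b i : E) :=
    b.orthonormal.comp_linearIsometry Wᗮ.subtypeₗᵢ
  have hproj : ∀ j, ∑ i, ⟪(b i : E), v j⟫ ^ 2 ≤ if v j ∉ W then c else 0 := by
    intro j
    by_cases hj : v j ∈ W
    · simp [hj, inner_left_of_mem_orthogonal hj (b _).2]
    · simpa [hj, ← real_inner_self_eq_norm_sq, sq] using
        (hb.sum_inner_products_le (v j) (s := univ)).trans (hc j)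
  calc (finrank ℝ Wᗮ : ℝ) = ∑ i, ‖(b i : E)‖ ^ 2 := by simp [hb.1]
    _ ≤ ∑ i, ∑ j, ⟪v j, b i⟫ ^ 2 := sum_le_sum fun i _ => hv _
    _ = ∑ j, ∑ i, ⟪(b i : E), v j⟫ ^ 2 := by rw [sum_comm]; simp only [real_inner_comm]
    _ ≤ ∑ j, if v j ∉ W then c else 0 := sum_le_sum fun j _ => hproj j
    _ = #{j | v j ∉ W} * c := by rw [← sum_filter, sum_const, nsmul_eq_mul]

omit [Fintype ι] in
theorem finrank_orthogonal_sup_span_singleton_add_one_le {W : Submodule ℝ E} {x : E}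
    (hx : x ∉ W) : finrank ℝ (W ⊔ span ℝ {x})ᗮ + 1 ≤ finrank ℝ Wᗮ := by
  have hlt : finrank ℝ W < finrank ℝ (W ⊔ span ℝ {x} : Submodule ℝ E) :=
    finrank_lt_finrank_of_lt <| left_lt_sup.mpr fun h =>
      hx ((span_singleton_le_iff_mem x W).mp h)
  have h₁ := W.finrank_add_finrank_orthogonal
  have h₂ := (W ⊔ span ℝ {x}).finrank_add_finrank_orthogonal
  omega

theorem finrank_le_card_mul (hv : ∀ x, ‖x‖ ^ 2 ≤ ∑ j, ⟪v j, x⟫ ^ 2)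
    (hc : ∀ j, ‖v j‖ ^ 2 ≤ c) : (finrank ℝ E : ℝ) ≤ Fintype.card ι * c := by
  classical
  have h := finrank_orthogonal_le_card_mul hv hc ⊥
  rw [bot_orthogonal_eq_top, finrank_top] at h
  obtain hι | ⟨⟨j⟩⟩ := isEmpty_or_nonempty ι
  · simpa using h
  · exact h.trans <| mul_le_mul_of_nonneg_right (by exact_mod_cast card_filter_le _ _)
      ((sq_nonneg _).trans (hc j))

open scoped Classical in
theorem sum_finrank_orthogonal_sup_span_singleton_le
    (hv : ∀ x, ‖x‖ ^ 2 ≤ ∑ j, ⟪v j, x⟫ ^ 2) (hc : ∀ j, ‖v j‖ ^ 2 ≤ c) (hc₀ : 0 < c)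
    (W : Submodule ℝ E) :
    ∑ j, (finrank ℝ (W ⊔ span ℝ {v j})ᗮ : ℝ) ≤ (Fintype.card ι - 1 / c) * finrank ℝ Wᗮ := by
  have hterm : ∀ j, (finrank ℝ (W ⊔ span ℝ {v j})ᗮ : ℝ) ≤
      finrank ℝ Wᗮ - if v j ∉ W then 1 else 0 := by
    intro j
    by_cases hj : v j ∈ W
    · rw [sup_eq_left.mpr ((span_singleton_le_iff_mem _ _).mpr hj)]
      simp [hj]
    · rw [if_pos hj, le_sub_iff_add_le]
      exact_mod_cast finrank_orthogonal_sup_span_singleton_add_one_le hj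
  have hcount : (finrank ℝ Wᗮ : ℝ) / c ≤ #{j | v j ∉ W} :=
    (div_le_iff₀ hc₀).mpr (finrank_orthogonal_le_card_mul hv hc W)
  calc ∑ j, (finrank ℝ (W ⊔ span ℝ {v j})ᗮ : ℝ)
      ≤ ∑ j, ((finrank ℝ Wᗮ : ℝ) - if v j ∉ W then 1 else 0) := sum_le_sum fun j _ => hterm j
    _ = Fintype.card ι * finrank ℝ Wᗮ - #{j | v j ∉ W} := by
      rw [sum_sub_distrib, sum_boole, sum_const, card_univ, nsmul_eq_mul]
    _ ≤ (Fintype.card ι - 1 / c) * finrank ℝ Wᗮ := by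
      rw [sub_mul, one_div_mul_eq_div]
      linarith

open scoped Classical in
theorem card_span_range_comp_ne_top_le (hv : ∀ x, ‖x‖ ^ 2 ≤ ∑ j, ⟪v j, x⟫ ^ 2)
    (hc : ∀ j, ‖v j‖ ^ 2 ≤ c) (m : ℕ) :
    (#{f : Fin m → ι | span ℝ (range (v ∘ f)) ≠ ⊤} : ℝ) ≤
      (Fintype.card ι - 1 / c) ^ m * finrank ℝ E := by
  obtain hE | hE := (finrank ℝ E).eq_zero_or_pos
  · have : Subsingleton E := finrank_zero_iff.mp hE
    simp [hE, Subsingleton.elim _ (⊤ : Submodule ℝ E)]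
  have hNc : 1 ≤ Fintype.card ι * c :=
    (Nat.one_le_cast.mpr hE).trans (finrank_le_card_mul hv hc)
  have hc₀ : 0 < c := pos_of_mul_pos_right (one_pos.trans_le hNc) (Nat.cast_nonneg _)
  have ha : 0 ≤ Fintype.card ι - 1 / c := by rw [sub_nonneg, div_le_iff₀ hc₀]; exact hNc
  have hbad : #{f : Fin m → ι | span ℝ (range (v ∘ f)) ≠ ⊤} ≤
      ∑ f : Fin m → ι, finrank ℝ (span ℝ (range (v ∘ f)))ᗮ := by
    rw [card_eq_sum_ones]
    refine (sum_le_sum fun f hf => ?_).trans (sum_le_sum_of_subset (filter_subset _ _))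
    rw [Nat.one_le_iff_ne_zero, Ne, Submodule.finrank_eq_zero, orthogonal_eq_bot_iff]
    exact (mem_filter.mp hf).2
  calc (#{f : Fin m → ι | span ℝ (range (v ∘ f)) ≠ ⊤} : ℝ)
      ≤ ∑ f : Fin m → ι, (finrank ℝ (span ℝ (range (v ∘ f)))ᗮ : ℝ) := by exact_mod_cast hbad
    _ ≤ (Fintype.card ι - 1 / c) ^ m * finrank ℝ (⊥ : Submodule ℝ E)ᗮ :=
      sum_pi_span_range_comp_le_pow v (fun W => (finrank ℝ Wᗮ : ℝ)) ha
        (sum_finrank_orthogonal_sup_span_singleton_le hv hc hc₀) m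
    _ = (Fintype.card ι - 1 / c) ^ m * finrank ℝ E := by
      rw [bot_orthogonal_eq_top, finrank_top]

end Frame

theorem Matrix.sum_dotProduct_row_sq_eq {m n R : Type*} [Fintype m] [Fintype n]
    [DecidableEq n] [CommRing R] {V : Matrix m n R} (hV : Vᵀ * V = 1) (x : n → R) :
    ∑ j, (x ⬝ᵥ V j) ^ 2 = x ⬝ᵥ x := by
  calc ∑ j, (x ⬝ᵥ V j) ^ 2 = (V *ᵥ x) ⬝ᵥ (V *ᵥ x) := by
        simp only [sq, dotProduct_comm x]
        rfl
    _ = x ⬝ᵥ x := by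
        rw [dotProduct_mulVec, ← mulVec_transpose, mulVec_mulVec, hV, one_mulVec,
          dotProduct_comm]

theorem EuclideanSpace.sum_inner_toLp_row_sq_eq {m n : Type*} [Fintype m] [Fintype n]
    [DecidableEq n] {V : Matrix m n ℝ} (hV : Vᵀ * V = 1) (x : EuclideanSpace ℝ n) :
    ∑ j, ⟪WithLp.toLp 2 (V j), x⟫ ^ 2 = ‖x‖ ^ 2 := by
  rw [← real_inner_self_eq_norm_sq]
  exact V.sum_dotProduct_row_sq_eq hV x.ofLp

section Rows

variable {m n : Type*} [Fintype m] [Fintype n] [DecidableEq n] {V : Matrix m n ℝ} {c : ℝ}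

theorem Matrix.card_le_card_mul_of_row_sq_le (hV : Vᵀ * V = 1)
    (hc : ∀ i, ∑ k, V i k ^ 2 ≤ c) : (Fintype.card n : ℝ) ≤ Fintype.card m * c := by
  simpa using finrank_le_card_mul (v := fun i => WithLp.toLp 2 (V i))
    (fun x => (EuclideanSpace.sum_inner_toLp_row_sq_eq hV x).ge)
    (fun i => by simpa [EuclideanSpace.norm_sq_eq] using hc i)

open scoped Classical in
theorem Matrix.card_span_rows_comp_ne_top_le (hV : Vᵀ * V = 1)
    (hc : ∀ i, ∑ k, V i k ^ 2 ≤ c) (p : ℕ) :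
    (#{f : Fin p → m | span ℝ (range (V ∘ f)) ≠ ⊤} : ℝ) ≤
      (Fintype.card m - 1 / c) ^ p * Fintype.card n := by
  let v : m → EuclideanSpace ℝ n := fun i => WithLp.toLp 2 (V i)
  have hspan : ∀ f : Fin p → m, span ℝ (range (v ∘ f)) = ⊤ → span ℝ (range (V ∘ f)) = ⊤ := by
    intro f hf
    have := congrArg (Submodule.map (WithLp.linearEquiv 2 ℝ (n → ℝ)).toLinearMap) hf
    rwa [map_span, ← range_comp, Submodule.map_top, LinearEquiv.range] at this
  calc (#{f : Fin p → m | span ℝ (range (V ∘ f)) ≠ ⊤} : ℝ)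
      ≤ #{f : Fin p → m | span ℝ (range (v ∘ f)) ≠ ⊤} :=
        Nat.cast_le.mpr (card_le_card (monotone_filter_right _ fun f _ => mt (hspan f)))
    _ ≤ (Fintype.card m - 1 / c) ^ p * Fintype.card n := by
        simpa using card_span_range_comp_ne_top_le (v := v)
          (fun x => (EuclideanSpace.sum_inner_toLp_row_sq_eq hV x).ge)
          (fun i => by simpa [v, EuclideanSpace.norm_sq_eq] using hc i) p

end Rows

theorem Matrix.span_range_col_comp_eq_range_mulVecLin {l n o ι R : Type*} [Fintype n]
    [Fintype o] [CommRing R] (A : Matrix l n R) {V : Matrix o n R} {f : ι → o}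
    (hf : span R (range (V ∘ f)) = ⊤) :
    span R (range ((A * Vᵀ).col ∘ f)) = LinearMap.range (A * Vᵀ).mulVecLin := by
  apply le_antisymm
  · rw [range_mulVecLin]
    exact span_mono (range_comp_subset_range _ _)
  · have hcol : (A * Vᵀ).col ∘ f = A.mulVecLin ∘ V ∘ f := rfl
    rw [hcol, range_comp, ← map_span, hf, Submodule.map_top, mulVecLin_mul]
    exact LinearMap.range_comp_le_range _ _

theorem nat_mul_one_sub_one_div_pow_le {k m : ℕ} {t δ : ℝ} (hkt : (k : ℝ) ≤ t)
    (hδ : δ ∈ Set.Ioo 0 1) (hm : 10 * t * Real.log (2 * k / δ) ≤ m) :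
    k * (1 - 1 / t) ^ m ≤ δ := by
  obtain ⟨hδ₀, hδ₁⟩ := hδ
  obtain rfl | hk := k.eq_zero_or_pos
  · simpa using hδ₀.le
  have hk₁ : (1 : ℝ) ≤ k := Nat.one_le_cast.mpr hk
  have ht : 0 < t := by linarith
  have hlog : 0 ≤ Real.log (2 * k / δ) :=
    Real.log_nonneg <| by rw [le_div_iff₀ hδ₀]; linarith
  have hdecay : (1 - 1 / t) ^ m ≤ δ / (2 * k) :=
    calc (1 - 1 / t) ^ m ≤ Real.exp (-(1 / t)) ^ m :=
          pow_le_pow_left₀ (by rw [sub_nonneg, div_le_one ht]; linarith)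
            (Real.one_sub_le_exp_neg _) m
      _ = Real.exp (-(m / t)) := by rw [← Real.exp_nat_mul]; ring_nf
      _ ≤ Real.exp (-Real.log (2 * k / δ)) := by
          gcongr
          rw [le_div_iff₀ ht]
          nlinarith
      _ = δ / (2 * k) := by rw [Real.exp_neg, Real.exp_log (by positivity), inv_div]
  calc k * (1 - 1 / t) ^ m ≤ k * (δ / (2 * k)) := by gcongr
    _ = δ / 2 := by field_simp
    _ ≤ δ := by linarith

theorem one_sub_le_card_filter_div_card {α : Type*} [Fintype α] [Nonempty α] (p : α → Prop)
    [DecidablePred p] {δ : ℝ} (h : (#{x | ¬p x} : ℝ) ≤ δ * Fintype.card α) :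
    1 - δ ≤ #{x | p x} / Fintype.card α := by
  have hsplit : (#{x | p x} : ℝ) + #{x | ¬p x} = Fintype.card α := by
    exact_mod_cast card_filter_add_card_filter_not p
  rw [le_div_iff₀ (by exact_mod_cast Fintype.card_pos)]
  linarith

open scoped Classical in
theorem stmt0_general (N1 N2 r : ℕ) [NeZero N2]
    (L : Matrix (Fin N1) (Fin N2) ℝ)
    (U : Matrix (Fin N1) (Fin r) ℝ) (S : Matrix (Fin r) (Fin r) ℝ)
    (V : Matrix (Fin N2) (Fin r) ℝ)
    (hsvd : L = U * S * Vᵀ) (horth : Vᵀ * V = 1)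
    (μv δ : ℝ) (hδ : δ ∈ Set.Ioo (0:ℝ) 1)
    (hcoh : ∀ i : Fin N2, ∑ k : Fin r, (V i k) ^ 2 ≤ μv * r / N2)
    (m1 : ℕ) (hm1 : (m1 : ℝ) ≥ 10 * μv * r * Real.log (2 * r / δ)) :
    1 - δ ≤
      ((Finset.univ.filter fun f : Fin m1 → Fin N2 =>
          Submodule.span ℝ (Set.range fun j : Fin m1 => fun x : Fin N1 => L x (f j))
            = LinearMap.range L.mulVecLin).card : ℝ) / (N2 : ℝ) ^ m1 := by
  have hN : (N2 : ℝ) ≠ 0 := NeZero.ne _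
  have hbad : (#{f : Fin m1 → Fin N2 | ¬span ℝ (range fun j => fun x => L x (f j)) =
      LinearMap.range L.mulVecLin} : ℝ) ≤ δ * Fintype.card (Fin m1 → Fin N2) :=
    calc _ ≤ (#{f : Fin m1 → Fin N2 | span ℝ (range (V ∘ f)) ≠ ⊤} : ℝ) := by
          refine Nat.cast_le.mpr <| card_le_card <|
            monotone_filter_right _ fun f _ => mt fun hf => ?_
          rw [hsvd]
          exact (U * S).span_range_col_comp_eq_range_mulVecLin hf
      _ ≤ (N2 - 1 / (μv * r / N2)) ^ m1 * r := by
          simpa using V.card_span_rows_comp_ne_top_le horth hcoh m1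
      _ = N2 ^ m1 * (r * (1 - 1 / (μv * r)) ^ m1) := by
          rw [one_div_div, ← mul_one_div (N2 : ℝ), ← mul_one_sub, mul_pow]
          ring
      _ ≤ N2 ^ m1 * δ := by
          gcongr
          refine nat_mul_one_sub_one_div_pow_le ?_ hδ (by linarith)
          simpa [mul_div_cancel₀ _ hN] using V.card_le_card_mul_of_row_sq_le horth hcoh
      _ = δ * Fintype.card (Fin m1 → Fin N2) := by simp [mul_comm]
  simpa using one_sub_le_card_filter_div_card _ hbad

open scoped Classical in
/-- Lemma 1: if `m1 ≥ 10 μ_v r log(2r/δ)` columns of a rank-`r` matrix `L`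
(with row-space coherence `μ_v`) are sampled uniformly at random with replacement,
then with probability at least `1 - δ` they span the column space of `L`. -/
theorem stmt0 (N1 N2 r : ℕ) [NeZero N2]
    (L : Matrix (Fin N1) (Fin N2) ℝ)
    (U : Matrix (Fin N1) (Fin r) ℝ) (S : Matrix (Fin r) (Fin r) ℝ)
    (V : Matrix (Fin N2) (Fin r) ℝ)
    (hrank : L.rank = r) (hsvd : L = U * S * Vᵀ) (horth : Vᵀ * V = 1)
    (μv δ : ℝ) (hδ : δ ∈ Set.Ioo (0:ℝ) 1)
    (hcoh : ∀ i : Fin N2, ∑ k : Fin r, (V i k) ^ 2 ≤ μv * r / N2)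
    (m1 : ℕ) (hm1 : (m1 : ℝ) ≥ 10 * μv * r * Real.log (2 * r / δ)) :
    1 - δ ≤
      ((Finset.univ.filter fun f : Fin m1 → Fin N2 =>
          Submodule.span ℝ (Set.range fun j : Fin m1 => fun x : Fin N1 => L x (f j))
            = LinearMap.range L.mulVecLin).card : ℝ) / (N2 : ℝ) ^ m1 :=
  stmt0_general N1 N2 r L U S V hsvd horth μv δ hδ hcoh m1 hm1
end

section
/- Let D = L + S where L, S ∈ ℝ^{N1×N2}, and suppose the column space of L contains no nonzero vector supported on fewer than k entries. Fix a column index i, and let d_i = l_i + s_i be the decomposition of the i-th column. If a ∈ ℝ^{N2−1} satisfies ‖d_i − D_{−i} a‖₀ < k − ‖s_i − S_{−i} a‖₀ and l_i = L_{−i} a, then d_i − D_{−i} a = s_i − S_{−i} a. Moreover, for any a ∈ ℝ^{N2−1}: if l_i = L_{−i} a then d_i − D_{−i} a = s_i − S_{−i} a, and if l_i ≠ L_{−i} a then d_i − D_{−i} a = (l_i − L_{−i} a) + (s_i − S_{−i} a) has at least k − ‖s_i − S_{−i} a‖₀ nonzero entries. -/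
open Matrix

open scoped Classical in
/-- Decompose `D = L + S` where the column space of `L` contains no nonzero vector with
fewer than `k` nonzero entries.  For a fixed column `i` and any coefficient vector `a`
on the remaining columns: if `l_i = L_{-i} a` then `d_i - D_{-i} a = s_i - S_{-i} a`;
and if `l_i ≠ L_{-i} a` then `d_i - D_{-i} a` has at least `k - ‖s_i - S_{-i} a‖₀`
nonzero entries. -/
theorem stmt4 (N1 N2 k : ℕ)
    (L S : Matrix (Fin N1) (Fin N2) ℝ)
    (D : Matrix (Fin N1) (Fin N2) ℝ) (hD : D = L + S)
    (hnosparse : ∀ v ∈ LinearMap.range L.mulVecLin, v ≠ 0 →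
        k ≤ (Finset.univ.filter fun x : Fin N1 => v x ≠ 0).card)
    (i : Fin N2) (a : {j : Fin N2 // j ≠ i} → ℝ) :
    -- residual decomposition (always holds)
    ((fun x => D x i - ∑ j : {j : Fin N2 // j ≠ i}, a j * D x (j : Fin N2))
        = fun x => (L x i - ∑ j : {j : Fin N2 // j ≠ i}, a j * L x (j : Fin N2))
            + (S x i - ∑ j : {j : Fin N2 // j ≠ i}, a j * S x (j : Fin N2))) ∧
    -- if the LR part is cancelled, the residual is exactly the sparse part
    (((fun x => L x i) = fun x => ∑ j : {j : Fin N2 // j ≠ i}, a j * L x (j : Fin N2)) →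
      (fun x => D x i - ∑ j : {j : Fin N2 // j ≠ i}, a j * D x (j : Fin N2))
        = fun x => S x i - ∑ j : {j : Fin N2 // j ≠ i}, a j * S x (j : Fin N2)) ∧
    -- otherwise the residual has many nonzero entries
    (((fun x => L x i) ≠ fun x => ∑ j : {j : Fin N2 // j ≠ i}, a j * L x (j : Fin N2)) →
      k - (Finset.univ.filter fun x : Fin N1 =>
              S x i - ∑ j : {j : Fin N2 // j ≠ i}, a j * S x (j : Fin N2) ≠ 0).card
        ≤ (Finset.univ.filter fun x : Fin N1 =>
              D x i - ∑ j : {j : Fin N2 // j ≠ i}, a j * D x (j : Fin N2) ≠ 0).card) := by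
  have hdec : (fun x => D x i - ∑ j : {j : Fin N2 // j ≠ i}, a j * D x (j : Fin N2))
      = fun x => (L x i - ∑ j : {j : Fin N2 // j ≠ i}, a j * L x (j : Fin N2))
          + (S x i - ∑ j : {j : Fin N2 // j ≠ i}, a j * S x (j : Fin N2)) := by
    funext x
    subst hD
    simp only [Matrix.add_apply, mul_add, Finset.sum_add_distrib]
    ring
  refine ⟨hdec, ?_, ?_⟩
  · intro h
    funext x
    have hx := congrFun hdec x
    have hLx := congrFun h x
    rw [hx, hLx]
    ring
  · intro h
    set u : Fin N1 → ℝ :=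
      fun x => L x i - ∑ j : {j : Fin N2 // j ≠ i}, a j * L x (j : Fin N2) with hu
    have hune : u ≠ 0 := by
      intro h0
      apply h
      funext x
      have := congrFun h0 x
      simp only [hu, Pi.zero_apply] at this
      linarith
    have hrange : u ∈ LinearMap.range L.mulVecLin := by
      refine ⟨fun j => if hj : j = i then 1 else -(a ⟨j, hj⟩), ?_⟩
      funext x
      have key : ∑ j : {j : Fin N2 // j ≠ i}, a j * L x (j : Fin N2)
          = ∑ j ∈ ({i}ᶜ : Finset (Fin N2)),
              (if hj : j = i then 0 else a ⟨j, hj⟩ * L x j) := by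
        rw [Finset.sum_subtype (s := ({i}ᶜ : Finset (Fin N2))) (p := fun j => j ≠ i)
          (f := fun j : Fin N2 => if hj : j = i then 0 else a ⟨j, hj⟩ * L x j)
          (fun j => by simp)]
        refine Finset.sum_congr rfl fun j _ => ?_
        rw [dif_neg j.2]
      simp only [Matrix.mulVecLin_apply, Matrix.mulVec, dotProduct, hu]
      rw [key]
      rw [show (Finset.univ : Finset (Fin N2)) = insert i ({i}ᶜ) by
        ext j; simp [em]]
      rw [Finset.sum_insert (by simp)]
      rw [dif_pos rfl, mul_one]
      rw [sub_eq_add_neg, ← Finset.sum_neg_distrib]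
      congr 1
      refine Finset.sum_congr rfl fun j hj => ?_
      have hji : j ≠ i := by simpa using hj
      rw [dif_neg hji, dif_neg hji]
      ring
    have hk := hnosparse u hrange hune
    have hsub : (Finset.univ.filter fun x : Fin N1 => u x ≠ 0) ⊆
        (Finset.univ.filter fun x : Fin N1 =>
            D x i - ∑ j : {j : Fin N2 // j ≠ i}, a j * D x (j : Fin N2) ≠ 0) ∪
        (Finset.univ.filter fun x : Fin N1 =>
            S x i - ∑ j : {j : Fin N2 // j ≠ i}, a j * S x (j : Fin N2) ≠ 0) := by
      intro x hx
      simp only [Finset.mem_filter, Finset.mem_union, Finset.mem_univ, true_and] at hx ⊢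
      by_contra hc
      push_neg at hc
      obtain ⟨h1, h2⟩ := hc
      have hx' := congrFun hdec x
      simp only [hu] at hx hx' ⊢
      apply hx
      rw [h2] at hx'
      rw [h1] at hx'
      linarith
    have := Finset.card_le_card hsub
    have := Finset.card_union_le
      (Finset.univ.filter fun x : Fin N1 =>
          D x i - ∑ j : {j : Fin N2 // j ≠ i}, a j * D x (j : Fin N2) ≠ 0)
      (Finset.univ.filter fun x : Fin N1 =>
          S x i - ∑ j : {j : Fin N2 // j ≠ i}, a j * S x (j : Fin N2) ≠ 0)
    omega
end
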